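/- arXiv:1405.5173 — 5 statements merged into one kernel-verified Lean document; each statement's English description precedes it below -/
import Mathlib

section
/- Let φ : ℂ → ℂ be continuous on the closed unit disk 𝔻̄, map 𝔻̄ into 𝔻̄ and 𝔻 into 𝔻, and be analytic on 𝔻. Let a ∈ 𝔻 and suppose the iterates φ_n converge to the constant a uniformly on every compact subset of 𝔻. Then φ_n → a uniformly on 𝔻 if and only if there exists N ≥ 1 such that φ_N(𝔻̄) ⊆ 𝔻. -/
/-!
If `φ_n → a` uniformly on `𝔻`, then for large `n` the iterate `φ_n` maps `𝔻`, and by continuity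
also `𝔻̄`, into a small closed ball around `a` lying inside `𝔻`. Conversely, if `φ_N(𝔻̄) ⊆ 𝔻`, then
`K = φ_N(𝔻̄)` is a compact subset of `𝔻`, on which the iterates converge uniformly, and
`φ_n = φ_{n-N} ∘ φ_N` for `n ≥ N`.
-/

open Metric Complex Filter Set

theorem tendstoUniformlyOn_const_iff_norm_sub_lt {X E : Type*} [SeminormedAddCommGroup E]
    {F : ℕ → X → E} {a : E} {s : Set X} :
    TendstoUniformlyOn F (fun _ => a) atTop s ↔
      ∀ ε > 0, ∃ N : ℕ, ∀ n ≥ N, ∀ z ∈ s, ‖F n z - a‖ < ε := by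
  simp only [Metric.tendstoUniformlyOn_iff, eventually_atTop, dist_comm a, dist_eq_norm]

theorem TendstoUniformlyOn.iterate_of_mapsTo_iterate {X : Type*} [UniformSpace X]
    {f : X → X} {a : X} {s K : Set X} {N : ℕ}
    (h : TendstoUniformlyOn (fun n => f^[n]) (fun _ => a) atTop K)
    (hN : MapsTo f^[N] s K) :
    TendstoUniformlyOn (fun n => f^[n]) (fun _ => a) atTop s := by
  intro u hu
  filter_upwards [(tendsto_sub_atTop_nat N).eventually (h u hu), eventually_ge_atTop N]
    with n hn hNn z hz
  have hsplit : f^[n] z = f^[n - N] (f^[N] z) := by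
    rw [← Function.iterate_add_apply, Nat.sub_add_cancel hNn]
  simpa only [hsplit] using hn _ (hN hz)

theorem eventually_iterate_mapsTo_ball_of_tendstoUniformlyOn {E : Type*}
    [NormedAddCommGroup E] [NormedSpace ℝ E] {f : E → E} {a c : E} {r : ℝ}
    (hf : ContinuousOn f (closedBall c r)) (hfr : MapsTo f (closedBall c r) (closedBall c r))
    (ha : a ∈ ball c r)
    (h : TendstoUniformlyOn (fun n => f^[n]) (fun _ => a) atTop (ball c r)) :
    ∀ᶠ n in atTop, MapsTo f^[n] (closedBall c r) (ball c r) := by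
  have hr : r ≠ 0 := (pos_of_mem_ball ha).ne'
  have hac : dist a c < r := ha
  set ε := (r - dist a c) / 2
  have hε : 0 < ε := by simp only [ε]; linarith
  have hball : closedBall a ε ⊆ ball c r := closedBall_subset_ball' (by simp only [ε]; linarith)
  filter_upwards [Metric.tendstoUniformlyOn_iff.1 h ε hε] with n hn
  have hn' : MapsTo f^[n] (ball c r) (ball a ε) := fun z hz => mem_ball_comm.1 (hn z hz)
  have hcl := hn'.closure_of_continuousOn (by rw [closure_ball c hr]; exact hf.iterate hfr n)
  rw [closure_ball c hr, closure_ball a hε.ne'] at hcl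
  exact hcl.mono_right hball

theorem stmt_0_general (φ : ℂ → ℂ) (a : ℂ)
    (hcont : ContinuousOn φ (closedBall (0:ℂ) 1))
    (hmapsc : Set.MapsTo φ (closedBall (0:ℂ) 1) (closedBall (0:ℂ) 1))
    (ha : a ∈ ball (0:ℂ) 1)
    (hloc : ∀ K : Set ℂ, K ⊆ ball (0:ℂ) 1 → IsCompact K →
      ∀ ε > 0, ∃ N : ℕ, ∀ n ≥ N, ∀ z ∈ K, ‖φ^[n] z - a‖ < ε) :
    (∀ ε > 0, ∃ N : ℕ, ∀ n ≥ N, ∀ z ∈ ball (0:ℂ) 1, ‖φ^[n] z - a‖ < ε) ↔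
      (∃ N : ℕ, 1 ≤ N ∧ Set.MapsTo φ^[N] (closedBall (0:ℂ) 1) (ball (0:ℂ) 1)) := by
  simp only [← tendstoUniformlyOn_const_iff_norm_sub_lt] at hloc ⊢
  constructor
  · intro h
    obtain ⟨N, hN, hN1⟩ := ((eventually_iterate_mapsTo_ball_of_tendstoUniformlyOn
      hcont hmapsc ha h).and (eventually_ge_atTop 1)).exists
    exact ⟨N, hN1, hN⟩
  · rintro ⟨N, -, hN⟩
    have hK := hloc _ (image_subset_iff.2 hN)
      ((isCompact_closedBall 0 1).image_of_continuousOn (hcont.iterate hmapsc N))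
    exact hK.iterate_of_mapsTo_iterate ((mapsTo_image _ _).mono_left ball_subset_closedBall)

theorem stmt_0 (φ : ℂ → ℂ) (a : ℂ)
    (hcont : ContinuousOn φ (closedBall (0:ℂ) 1))
    (hmapsc : Set.MapsTo φ (closedBall (0:ℂ) 1) (closedBall (0:ℂ) 1))
    (hmaps : Set.MapsTo φ (ball (0:ℂ) 1) (ball (0:ℂ) 1))
    (hanal : DifferentiableOn ℂ φ (ball (0:ℂ) 1))
    (ha : a ∈ ball (0:ℂ) 1)
    (hloc : ∀ K : Set ℂ, K ⊆ ball (0:ℂ) 1 → IsCompact K →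
      ∀ ε > 0, ∃ N : ℕ, ∀ n ≥ N, ∀ z ∈ K, ‖φ^[n] z - a‖ < ε) :
    (∀ ε > 0, ∃ N : ℕ, ∀ n ≥ N, ∀ z ∈ ball (0:ℂ) 1, ‖φ^[n] z - a‖ < ε) ↔
      (∃ N : ℕ, 1 ≤ N ∧ Set.MapsTo φ^[N] (closedBall (0:ℂ) 1) (ball (0:ℂ) 1)) :=
  stmt_0_general φ a hcont hmapsc ha hloc
end

section
/- For every real t > 0, the iterates (φ_t)_n = φ_t^[n] converge to the constant function 1 uniformly on 𝔻, i.e., for every ε > 0 there is N such that for all n ≥ N and all z ∈ 𝔻, |φ_t^[n](z) − 1| < ε. -/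
/-!
In the coordinate `w = (1 - z)⁻¹`, which maps the half-plane `re z < 1` onto `re w > 0` and the
Denjoy–Wolff point `1` to `∞`, the map `φ_s` is the translation `w ↦ w + s / 2`. Hence
`(1 - φ_t^[n] z)⁻¹ = (1 - z)⁻¹ + n t / 2` has real part at least `n t / 2`, so
`‖φ_t^[n] z - 1‖ ≤ 2 / (n t)` uniformly on the half-plane, and in particular on `𝔻`.
-/

open Metric Complex

/-- The parabolic non-automorphism semigroup maps
`φ_t(z) = (t + (2−t)z)/((2+t) − t z)`. -/
noncomputable def phiT (t : ℝ) (z : ℂ) : ℂ :=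
  ((t : ℂ) + (2 - (t : ℂ)) * z) / ((2 + (t : ℂ)) - (t : ℂ) * z)

namespace Complex

lemma re_inv_pos_iff {w : ℂ} : 0 < w⁻¹.re ↔ 0 < w.re := by
  rcases eq_or_ne w 0 with rfl | hw
  · simp
  · rw [inv_re, div_pos_iff_of_pos_right (normSq_pos.2 hw)]

lemma norm_inv_le_of_le_re {w : ℂ} {c : ℝ} (hc : 0 < c) (hw : c ≤ w.re) : ‖w⁻¹‖ ≤ c⁻¹ := by
  rw [norm_inv]
  exact inv_anti₀ hc (hw.trans (re_le_norm w))

end Complex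

section Parabolic

variable {s : ℝ} {z : ℂ}

lemma inv_one_sub_phiT (hs : 0 ≤ s) (hz : z.re < 1) :
    (1 - phiT s z)⁻¹ = (1 - z)⁻¹ + ((s / 2 : ℝ) : ℂ) := by
  have h1z : 1 - z ≠ 0 := ne_zero_of_re_pos (by simpa using hz)
  have hden : (2 + (s : ℂ)) - s * z ≠ 0 := ne_zero_of_re_pos <| by
    simp only [sub_re, add_re, re_ofNat, ofReal_re, mul_re, ofReal_im, zero_mul, sub_zero]
    nlinarith
  have hsub : 1 - phiT s z = 2 * (1 - z) / ((2 + (s : ℂ)) - s * z) := by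
    unfold phiT
    field_simp
    ring
  rw [hsub]
  push_cast
  field_simp
  ring

lemma mapsTo_phiT (hs : 0 ≤ s) : Set.MapsTo (phiT s) {z | z.re < 1} {z | z.re < 1} := by
  intro z hz
  have : 0 < (1 - phiT s z)⁻¹.re := by
    rw [inv_one_sub_phiT hs hz, add_re, ofReal_re]
    have : 0 < (1 - z)⁻¹.re := re_inv_pos_iff.2 (by simpa using hz)
    positivity
  simpa using re_inv_pos_iff.1 this

lemma inv_one_sub_iterate_phiT (hs : 0 ≤ s) (hz : z.re < 1) (n : ℕ) :
    (1 - (phiT s)^[n] z)⁻¹ = (1 - z)⁻¹ + ((n * (s / 2) : ℝ) : ℂ) := by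
  induction n with
  | zero => simp
  | succ n ih =>
    rw [Function.iterate_succ_apply', inv_one_sub_phiT hs ((mapsTo_phiT hs).iterate n hz), ih]
    push_cast
    ring

lemma norm_iterate_phiT_sub_one_le (hs : 0 ≤ s) {n : ℕ} (hsn : 0 < n * (s / 2))
    (hz : z.re < 1) : ‖(phiT s)^[n] z - 1‖ ≤ (n * (s / 2))⁻¹ := by
  rw [← norm_neg, neg_sub, ← inv_inv (1 - _), inv_one_sub_iterate_phiT hs hz]
  refine norm_inv_le_of_le_re hsn ?_
  have : 0 < (1 - z)⁻¹.re := re_inv_pos_iff.2 (by simpa using hz)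
  simp only [add_re, ofReal_re]
  linarith

end Parabolic

theorem stmt_7 (t : ℝ) (ht : 0 < t) :
    ∀ ε > 0, ∃ N : ℕ, ∀ n ≥ N, ∀ z ∈ ball (0:ℂ) 1,
      ‖(phiT t)^[n] z - 1‖ < ε := by
  intro ε hε
  have hgrow : Filter.Tendsto (fun n : ℕ => (n : ℝ) * (t / 2)) Filter.atTop Filter.atTop :=
    tendsto_natCast_atTop_atTop.atTop_mul_const (half_pos ht)
  obtain ⟨N, hN⟩ := Filter.eventually_atTop.1 <|
    (hgrow.eventually_gt_atTop 0).and
      ((tendsto_inv_atTop_zero.comp hgrow).eventually (gt_mem_nhds hε))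
  refine ⟨N, fun n hn z hz => ?_⟩
  have hre : z.re < 1 := (re_le_norm z).trans_lt (mem_ball_zero_iff.1 hz)
  exact (norm_iterate_phiT_sub_one_le ht.le (hN n hn).1 hre).trans_lt (hN n hn).2
end

section
/- Let φ : ℂ → ℂ be analytic on 𝔻 and map 𝔻 into 𝔻, let a ∈ ℂ, and suppose there are constants K ≥ 0 and 0 ≤ c < 1 such that |φ_n(z) − a| ≤ K·c^n for every z ∈ 𝔻 and every n ≥ 0. Let η : ℂ → ℂ be analytic on 𝔻 with |η(z) − η(a)| ≤ L·|z − a| for all z ∈ 𝔻 and some L ≥ 0, and set ψ = exp∘η, g(z) = Σ_{n=0}^{∞} (η(φ_n(z)) − η(a)) (the series converges for each z ∈ 𝔻), and h = exp∘g. Then h is analytic on 𝔻, there are constants 0 < m ≤ M with m ≤ |h(z)| ≤ M for all z ∈ 𝔻 (so h and 1/h are bounded on 𝔻), and h is an eigenfunction identity solution: ψ(z)·h(φ(z)) = ψ(a)·h(z) for every z ∈ 𝔻. -/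
open Metric Complex

/-!
Uniformly on the disc, the `n`-th term of the series defining `g` is at most `L K cⁿ`, so `g` is a
uniformly convergent series of holomorphic functions with `‖g‖ ≤ B := ∑ L K cⁿ`; hence
`h = exp ∘ g` is holomorphic with `exp (-B) ≤ ‖h‖ ≤ exp B`. Dropping the first term of the series
gives `g = (η - η a) + g ∘ φ`, and exponentiating this is the eigenvector identity.
-/

section IterateSeries

variable {s : Set ℂ} {φ η : ℂ → ℂ} {a : ℂ}

theorem norm_comp_iterate_sub_le {K c L : ℝ} (hmaps : Set.MapsTo φ s s) (hL : 0 ≤ L)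
    (hbound : ∀ z ∈ s, ∀ n : ℕ, ‖φ^[n] z - a‖ ≤ K * c ^ n)
    (hlip : ∀ z ∈ s, ‖η z - η a‖ ≤ L * ‖z - a‖) {z : ℂ} (hz : z ∈ s) (n : ℕ) :
    ‖η (φ^[n] z) - η a‖ ≤ L * K * c ^ n :=
  calc ‖η (φ^[n] z) - η a‖ ≤ L * ‖φ^[n] z - a‖ := hlip _ (hmaps.iterate n hz)
    _ ≤ L * (K * c ^ n) := mul_le_mul_of_nonneg_left (hbound z hz n) hL
    _ = L * K * c ^ n := (mul_assoc ..).symm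

theorem differentiableOn_tsum_comp_iterate_sub {u : ℕ → ℝ} (hs : IsOpen s)
    (hφ : DifferentiableOn ℂ φ s) (hmaps : Set.MapsTo φ s s) (hη : DifferentiableOn ℂ η s)
    (hu : Summable u) (hdom : ∀ z ∈ s, ∀ n : ℕ, ‖η (φ^[n] z) - η a‖ ≤ u n) :
    DifferentiableOn ℂ (fun z => ∑' n : ℕ, (η (φ^[n] z) - η a)) s :=
  differentiableOn_tsum_of_summable_norm hu
    (fun n => (hη.comp (hφ.iterate hmaps n) (hmaps.iterate n)).sub_const _) hs
    (fun n z hz => hdom z hz n)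

theorem tsum_comp_iterate_sub_eq_add {z : ℂ}
    (hsum : Summable fun n : ℕ => η (φ^[n] z) - η a) :
    ∑' n : ℕ, (η (φ^[n] z) - η a) = (η z - η a) + ∑' n : ℕ, (η (φ^[n] (φ z)) - η a) := by
  simp only [hsum.tsum_eq_zero_add, Function.iterate_zero_apply, Function.iterate_succ_apply]

end IterateSeries

theorem Complex.norm_exp_mem_Icc_of_norm_le {w : ℂ} {B : ℝ} (hw : ‖w‖ ≤ B) :
    ‖exp w‖ ∈ Set.Icc (Real.exp (-B)) (Real.exp B) := by
  have hre : |w.re| ≤ B := (abs_re_le_norm w).trans hw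
  rw [norm_exp]
  exact ⟨Real.exp_le_exp.2 (neg_le_of_abs_le hre), Real.exp_le_exp.2 (le_of_abs_le hre)⟩

theorem stmt_11_general (φ η ψ g h : ℂ → ℂ) (a : ℂ) (K c L : ℝ)
    (hφ : DifferentiableOn ℂ φ (ball (0:ℂ) 1))
    (hmaps : Set.MapsTo φ (ball (0:ℂ) 1) (ball (0:ℂ) 1))
    (hc0 : 0 ≤ c) (hc1 : c < 1)
    (hbound : ∀ z ∈ ball (0:ℂ) 1, ∀ n : ℕ,
      ‖φ^[n] z - a‖ ≤ K * c ^ n)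
    (hη : DifferentiableOn ℂ η (ball (0:ℂ) 1))
    (hL : 0 ≤ L)
    (hlip : ∀ z ∈ ball (0:ℂ) 1, ‖η z - η a‖ ≤ L * ‖z - a‖)
    (hψ : ψ = fun z => Complex.exp (η z))
    (hg : ∀ z : ℂ, g z = ∑' n : ℕ, (η (φ^[n] z) - η a))
    (hh : h = fun z => Complex.exp (g z)) :
    (∀ z ∈ ball (0:ℂ) 1, Summable fun n : ℕ => η (φ^[n] z) - η a) ∧
    DifferentiableOn ℂ h (ball (0:ℂ) 1) ∧
    (∃ m M : ℝ, 0 < m ∧ m ≤ M ∧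
      ∀ z ∈ ball (0:ℂ) 1, m ≤ ‖h z‖ ∧ ‖h z‖ ≤ M) ∧
    ∀ z ∈ ball (0:ℂ) 1, ψ z * h (φ z) = ψ a * h z := by
  have hdom z (hz : z ∈ ball (0:ℂ) 1) := norm_comp_iterate_sub_le hmaps hL hbound hlip hz
  have hu : Summable fun n : ℕ => L * K * c ^ n :=
    (summable_geometric_of_lt_one hc0 hc1).mul_left (L * K)
  have hsum z (hz : z ∈ ball (0:ℂ) 1) : Summable fun n : ℕ => η (φ^[n] z) - η a :=
    hu.of_norm_bounded (hdom z hz)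
  set B := ∑' n : ℕ, L * K * c ^ n
  have hgB z (hz : z ∈ ball (0:ℂ) 1) : ‖g z‖ ≤ B :=
    (hg z).symm ▸ tsum_of_norm_bounded hu.hasSum (hdom z hz)
  have hB : 0 ≤ B := (norm_nonneg _).trans (hgB 0 (mem_ball_self one_pos))
  subst hψ hh
  refine ⟨hsum, ?_, ⟨Real.exp (-B), Real.exp B, Real.exp_pos _,
    Real.exp_le_exp.2 (by linarith), fun z hz => norm_exp_mem_Icc_of_norm_le (hgB z hz)⟩,
    fun z hz => ?_⟩
  · exact ((differentiableOn_tsum_comp_iterate_sub isOpen_ball hφ hmaps hη hu hdom).congr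
      fun z _ => hg z).cexp
  · rw [← exp_add, ← exp_add, hg z, hg (φ z), tsum_comp_iterate_sub_eq_add (hsum z hz)]
    congr 1
    ring

theorem stmt_11 (φ η ψ g h : ℂ → ℂ) (a : ℂ) (K c L : ℝ)
    (hφ : DifferentiableOn ℂ φ (ball (0:ℂ) 1))
    (hmaps : Set.MapsTo φ (ball (0:ℂ) 1) (ball (0:ℂ) 1))
    (hK : 0 ≤ K) (hc0 : 0 ≤ c) (hc1 : c < 1)
    (hbound : ∀ z ∈ ball (0:ℂ) 1, ∀ n : ℕ,
      ‖φ^[n] z - a‖ ≤ K * c ^ n)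
    (hη : DifferentiableOn ℂ η (ball (0:ℂ) 1))
    (hL : 0 ≤ L)
    (hlip : ∀ z ∈ ball (0:ℂ) 1, ‖η z - η a‖ ≤ L * ‖z - a‖)
    (hψ : ψ = fun z => Complex.exp (η z))
    (hg : ∀ z : ℂ, g z = ∑' n : ℕ, (η (φ^[n] z) - η a))
    (hh : h = fun z => Complex.exp (g z)) :
    (∀ z ∈ ball (0:ℂ) 1, Summable fun n : ℕ => η (φ^[n] z) - η a) ∧
    DifferentiableOn ℂ h (ball (0:ℂ) 1) ∧
    (∃ m M : ℝ, 0 < m ∧ m ≤ M ∧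
      ∀ z ∈ ball (0:ℂ) 1, m ≤ ‖h z‖ ∧ ‖h z‖ ≤ M) ∧
    ∀ z ∈ ball (0:ℂ) 1, ψ z * h (φ z) = ψ a * h z :=
  stmt_11_general φ η ψ g h a K c L hφ hmaps hc0 hc1 hbound hη hL hlip hψ hg hh
end

section
/- Let h ∈ ℓ²(ℕ, ℂ) and suppose that ⟨h, (I − S)^n h⟩ = 0 for every integer n ≥ 1, where S is the forward shift and I the identity. Then ⟨h, S^n h⟩ = ⟨h, h⟩ for every integer n ≥ 1. -/
open scoped ComplexInnerProductSpace

open Polynomial in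
theorem LinearMap.map_aeval_eq_coeff_zero_smul {R A M : Type*} [CommSemiring R] [Semiring A]
    [Algebra R A] [AddCommMonoid M] [Module R M] (φ : A →ₗ[R] M) {a : A}
    (ha : ∀ k, 1 ≤ k → φ (a ^ k) = 0) (p : R[X]) :
    φ (aeval a p) = p.coeff 0 • φ 1 := by
  rw [aeval_eq_sum_range, map_sum, Finset.sum_range_succ']
  simp only [map_smul, pow_zero]
  rw [Finset.sum_eq_zero fun i _ => by rw [ha (i + 1) i.succ_pos, smul_zero], zero_add]

theorem stmt_14_general (h : lp (fun _ : ℕ => ℂ) 2)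
    (S : lp (fun _ : ℕ => ℂ) 2 →L[ℂ] lp (fun _ : ℕ => ℂ) 2)
    (hinner : ∀ n : ℕ, 1 ≤ n → ⟪h, ((1 - S) ^ n) h⟫ = 0) :
    ∀ n : ℕ, 1 ≤ n → ⟪h, (S ^ n) h⟫ = ⟪h, h⟫ := by
  intro n _
  -- `S ^ n = (1 - T) ^ n` with `T = 1 - S`, a polynomial in `T` with constant coefficient `1`.
  let φ := innerₛₗ ℂ h ∘ₗ (ContinuousLinearMap.apply ℂ _ h).toLinearMap
  have := φ.map_aeval_eq_coeff_zero_smul hinner ((1 - Polynomial.X) ^ n)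
  simpa [φ, Polynomial.coeff_zero_eq_eval_zero] using this

theorem stmt_14 (h : lp (fun _ : ℕ => ℂ) 2)
    (S : lp (fun _ : ℕ => ℂ) 2 →L[ℂ] lp (fun _ : ℕ => ℂ) 2)
    (hS : ∀ f : lp (fun _ : ℕ => ℂ) 2,
      (S f : ∀ _ : ℕ, ℂ) 0 = 0 ∧ ∀ k : ℕ, (S f : ∀ _ : ℕ, ℂ) (k + 1) = (f : ∀ _ : ℕ, ℂ) k)
    (hinner : ∀ n : ℕ, 1 ≤ n → ⟪h, ((1 - S) ^ n) h⟫ = 0) :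
    ∀ n : ℕ, 1 ≤ n → ⟪h, (S ^ n) h⟫ = ⟪h, h⟫ :=
  stmt_14_general h S hinner
end

section
/- Let h ∈ ℓ²(ℕ, ℂ) and suppose that ⟨h, (I − S)^n h⟩ = 0 for every integer n ≥ 1, where S is the forward shift and I the identity. Then h = 0. (Under the identification of H² with ℓ², this says: an H² function orthogonal to (1−z)^n·h for all n ≥ 1 must vanish; this is the key step showing no weighted composition operator with hyperbolic non-automorphism symbol is hyponormal.) -/
/-! For n = 1 the hypothesis reads ⟪h, S h⟫ = ‖h‖². Since S is an isometry,
‖h - S h‖² = ‖S h‖² - ‖h‖² = 0, so S h = h; a sequence fixed by the shift vanishes. -/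

open scoped ComplexInnerProductSpace

theorem eq_of_norm_le_of_re_inner_eq_norm_sq {𝕜 E : Type*} [RCLike 𝕜] [NormedAddCommGroup E]
    [InnerProductSpace 𝕜 E] {x y : E} (hle : ‖y‖ ≤ ‖x‖) (hre : RCLike.re (inner 𝕜 x y) = ‖x‖ ^ 2) :
    y = x := by
  have hsq : ‖x - y‖ ^ 2 ≤ 0 := by
    rw [norm_sub_sq (𝕜 := 𝕜), hre]
    nlinarith [norm_nonneg y]
  exact (sub_eq_zero.mp (norm_eq_zero.mp (by nlinarith [norm_nonneg (x - y)]))).symm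

theorem lp.norm_eq_of_shift {E : Type*} [NormedAddCommGroup E] {p : ENNReal} [Fact (1 ≤ p)]
    (hp : 0 < p.toReal) {f g : lp (fun _ : ℕ => E) p} (h0 : g 0 = 0) (hsucc : ∀ k, g (k + 1) = f k) :
    ‖g‖ = ‖f‖ := by
  have hpow : ‖g‖ ^ p.toReal = ‖f‖ ^ p.toReal := by
    rw [lp.norm_rpow_eq_tsum hp, lp.norm_rpow_eq_tsum hp,
      ((lp.memℓp g).summable hp).tsum_eq_zero_add]
    simp [h0, hsucc, Real.zero_rpow hp.ne']
  exact (Real.rpow_left_injOn hp.ne' (norm_nonneg g) (norm_nonneg f)) hpow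

theorem stmt_15 (h : lp (fun _ : ℕ => ℂ) 2)
    (S : lp (fun _ : ℕ => ℂ) 2 →L[ℂ] lp (fun _ : ℕ => ℂ) 2)
    (hS : ∀ f : lp (fun _ : ℕ => ℂ) 2,
      (S f : ∀ _ : ℕ, ℂ) 0 = 0 ∧ ∀ k : ℕ, (S f : ∀ _ : ℕ, ℂ) (k + 1) = (f : ∀ _ : ℕ, ℂ) k)
    (hinner : ∀ n : ℕ, 1 ≤ n → ⟪h, ((1 - S) ^ n) h⟫ = 0) :
    h = 0 := by
  obtain ⟨hS0, hSsucc⟩ := hS h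
  have hinner_S : ⟪h, S h⟫ = ⟪h, h⟫ := by
    have := hinner 1 le_rfl
    rw [pow_one, sub_apply, inner_sub_right] at this
    exact (sub_eq_zero.mp this).symm
  have hnorm : ‖S h‖ = ‖h‖ := lp.norm_eq_of_shift (by norm_num) hS0 hSsucc
  have hfix : S h = h :=
    eq_of_norm_le_of_re_inner_eq_norm_sq hnorm.le (by rw [hinner_S, inner_self_eq_norm_sq])
  ext k
  induction k with
  | zero => rw [← hfix, hS0]; rfl
  | succ k ih => rw [← hfix, hSsucc, ih]; rfl
end
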